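/- arXiv:1209.1728 — 2 statements merged into one kernel-verified Lean document; each statement's English description precedes it below -/
import Mathlib

section
/- Let M ⊂ B(H) be a von Neumann algebra with a cyclic separating vector, J its modular conjugation, and K(H) the compact operators. Suppose θ: A ⊗ JAJ → B(H) is a u.c.p. map on the minimal tensor product of a C*-subalgebra A ⊂ M with JAJ, such that θ(a⊗JbJ) − aJbJ is compact for all a,b ∈ A. If (p_j) is a net of finite-rank projections on H converging strongly to 1, then for every element S of the algebraic tensor product A ⊙ JAJ, limsup_j ‖ν(S)(1−p_j)‖ ≤ ‖Θ(S)‖, where ν(a⊗JbJ) = aJbJ is the multiplication map and Θ is the extension of θ. -/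
/-!
Put `T = ∑ θS i` and `N = ∑ a i * c i`, so that `K = T - N` is compact and
`N (1 - P j) = T (1 - P j) - K (1 - P j)`, where the first term has norm at most `‖T‖`.
A compact operator followed by a strongly null, uniformly bounded net is norm null: by
equicontinuity the net converges uniformly on the compact closure of the image of the unit
ball. For the product `K Q` in the other order, the C*-identity `‖K Q‖² = ‖Q (K⋆ K) Q‖`
for self-adjoint `Q` reduces to the compact operator `K⋆ K` acted on from the left.
-/

open Filter Topology

/-- A projection in a ∗-ring: a self-adjoint idempotent. -/
def IsProjection {A : Type*} [Ring A] [StarRing A] (p : A) : Prop :=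
  IsSelfAdjoint p ∧ IsIdempotentElem p

section CompactConvergence

variable {𝕜 E F G ι : Type*} [NontriviallyNormedField 𝕜]
  [NormedAddCommGroup E] [NormedSpace 𝕜 E] [NormedAddCommGroup F] [NormedSpace 𝕜 F]
  [NormedAddCommGroup G] [NormedSpace 𝕜 G] {l : Filter ι} {Q : ι → F →L[𝕜] G} {B : ℝ}

theorem ContinuousLinearMap.tendstoUniformlyOn_of_norm_le (hQB : ∀ j, ‖Q j‖ ≤ B) {f : F → G}
    (hQ : ∀ y, Tendsto (fun j => Q j y) l (𝓝 (f y))) {K : Set F} (hK : IsCompact K) :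
    TendstoUniformlyOn (fun j => ⇑(Q j)) f l K := by
  have hQeq : Equicontinuous (DFunLike.coe ∘ Q) :=
    ((NormedSpace.equicontinuous_TFAE Q).out 1 5).2 (⟨B, hQB⟩ : ∃ C, ∀ j, ‖Q j‖ ≤ C)
  have hunif := (EquicontinuousOn.tendsto_uniformOnFun_iff_pi (𝔖 := {K | IsCompact K})
    (fun _ h => h) (Set.sUnion_eq_univ_iff.2 fun y => ⟨{y}, isCompact_singleton, rfl⟩)
    (fun K _ => hQeq.equicontinuousOn K) l f).2 (tendsto_pi_nhds.2 hQ)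
  exact UniformOnFun.tendsto_iff_tendstoUniformlyOn.1 hunif K hK

theorem IsCompactOperator.tendsto_comp_of_norm_le [NormedAlgebra ℝ 𝕜] {C : E →L[𝕜] F}
    (hC : IsCompactOperator C) (hQB : ∀ j, ‖Q j‖ ≤ B)
    (hQ : ∀ y, Tendsto (fun j => Q j y) l (𝓝 0)) :
    Tendsto (fun j => (Q j).comp C) l (𝓝 0) := by
  have hunif := Metric.tendstoUniformlyOn_iff.1
    (ContinuousLinearMap.tendstoUniformlyOn_of_norm_le hQB hQ
      (hC.isCompact_closure_image_closedBall 1))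
  refine Metric.tendsto_nhds.2 fun ε hε => ?_
  filter_upwards [hunif (ε / 2) (half_pos hε)] with j hj
  rw [dist_zero_right]
  refine lt_of_le_of_lt (ContinuousLinearMap.opNorm_le_of_unit_norm (half_pos hε).le
    fun x hx => ?_) (half_lt_self hε)
  have hCx : C x ∈ closure (C '' Metric.closedBall 0 1) :=
    subset_closure ⟨x, by simp [hx], rfl⟩
  simpa using (hj _ hCx).le

end CompactConvergence

theorem IsCompactOperator.tendsto_mul_of_isSelfAdjoint {𝕜 H ι : Type*} [RCLike 𝕜]
    [NormedAddCommGroup H] [InnerProductSpace 𝕜 H] [CompleteSpace H] {l : Filter ι}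
    {K : H →L[𝕜] H} (hK : IsCompactOperator K) {Q : ι → H →L[𝕜] H}
    (hQsa : ∀ j, IsSelfAdjoint (Q j)) {B : ℝ} (hQB : ∀ j, ‖Q j‖ ≤ B)
    (hQ : ∀ y, Tendsto (fun j => Q j y) l (𝓝 0)) :
    Tendsto (fun j => K * Q j) l (𝓝 0) := by
  have hQKK : Tendsto (fun j => Q j * (star K * K)) l (𝓝 0) :=
    (hK.clm_comp (star K)).tendsto_comp_of_norm_le hQB hQ
  have hbound : ∀ j, ‖K * Q j‖ ≤ √(‖Q j * (star K * K)‖ * B) := fun j => by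
    refine Real.le_sqrt_of_sq_le ?_
    calc ‖K * Q j‖ ^ 2 = ‖Q j * (star K * K) * Q j‖ := by
          rw [sq, ← CStarRing.norm_star_mul_self, star_mul, (hQsa j).star_eq]; noncomm_ring
      _ ≤ ‖Q j * (star K * K)‖ * B := (norm_mul_le _ _).trans (by gcongr; exact hQB j)
  have hlim : Tendsto (fun j => √(‖Q j * (star K * K)‖ * B)) l (𝓝 0) := by
    simpa using (hQKK.norm.mul_const B).sqrt
  exact tendsto_zero_iff_norm_tendsto_zero.2
    (squeeze_zero (fun _ => norm_nonneg _) hbound hlim)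

theorem limsup_norm_mul_le_of_tendsto_sub_mul {R ι : Type*} [NormedRing R] {l : Filter ι}
    [l.NeBot] {n t : R} {q : ι → R} (hq : ∀ j, ‖q j‖ ≤ 1)
    (htn : Tendsto (fun j => (t - n) * q j) l (𝓝 0)) :
    limsup (fun j => ‖n * q j‖) l ≤ ‖t‖ := by
  have hbound : ∀ j, ‖n * q j‖ ≤ ‖t‖ + ‖(t - n) * q j‖ := fun j =>
    calc ‖n * q j‖ = ‖t * q j - (t - n) * q j‖ := by rw [← sub_mul, sub_sub_cancel]
      _ ≤ ‖t‖ * ‖q j‖ + ‖(t - n) * q j‖ :=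
          (norm_sub_le _ _).trans (by gcongr; exact norm_mul_le _ _)
      _ ≤ ‖t‖ + ‖(t - n) * q j‖ := by
          gcongr; exact mul_le_of_le_one_right (norm_nonneg _) (hq j)
  have hlim : Tendsto (fun j => ‖t‖ + ‖(t - n) * q j‖) l (𝓝 ‖t‖) := by
    simpa using htn.norm.const_add ‖t‖
  calc limsup (fun j => ‖n * q j‖) l ≤ limsup (fun j => ‖t‖ + ‖(t - n) * q j‖) l :=
        limsup_le_limsup (Eventually.of_forall hbound)
          (isCoboundedUnder_le_of_le l fun _ => norm_nonneg _) hlim.isBoundedUnder_le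
    _ = ‖t‖ := hlim.limsup_eq

theorem stmt3_general {H : Type*} [NormedAddCommGroup H] [InnerProductSpace ℂ H] [CompleteSpace H]
    -- an element S = ∑ i, a i ⊗ (J (b i) J) of A ⊙ JAJ, with c i = J (b i) J
    (n : ℕ) (a c : Fin n → (H →L[ℂ] H))
    -- the values θS i = θ(a i ⊗ J (b i) J) of the u.c.p. map θ, with θ(a⊗JbJ) − aJbJ compact
    (θS : Fin n → (H →L[ℂ] H))
    (hθcompact : ∀ i, IsCompactOperator ((θS i - a i * c i) : H →L[ℂ] H))
    -- a net of finite-rank projections converging strongly to 1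
    {ι : Type*} (l : Filter ι) [l.NeBot] (P : ι → (H →L[ℂ] H))
    (hPproj : ∀ j, IsProjection (P j))
    (hPto1 : ∀ ξ : H, Filter.Tendsto (fun j => (P j) ξ) l (nhds ξ)) :
    Filter.limsup (fun j => ‖(∑ i, a i * c i) * (1 - P j)‖) l ≤ ‖∑ i, θS i‖ := by
  have hcompact : IsCompactOperator (∑ i, θS i - ∑ i, a i * c i) := by
    rw [← Finset.sum_sub_distrib]
    exact Submodule.sum_mem (compactOperator _ _ _) fun i _ => hθcompact i
  have hQ : ∀ j, IsStarProjection (1 - P j) := fun j =>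
    IsStarProjection.one_sub ⟨(hPproj j).2, (hPproj j).1⟩
  have hQ0 : ∀ ξ, Tendsto (fun j => (1 - P j) ξ) l (𝓝 0) := fun ξ => by
    simpa using (hPto1 ξ).const_sub ξ
  exact limsup_norm_mul_le_of_tendsto_sub_mul (fun j => (hQ j).norm_le)
    (hcompact.tendsto_mul_of_isSelfAdjoint (fun j => (hQ j).isSelfAdjoint)
      (fun j => (hQ j).norm_le) hQ0)

/-- let `M ⊂ B(H)` be a von Neumann algebra in standard form with modular
conjugation `J` (an antiunitary involution with `JMJ = M'`), and `A ⊂ M` a σ-weakly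
dense unital C*-subalgebra.  Suppose `θ` is a u.c.p. map on `A ⊗_min JAJ` such that
`θ(a ⊗ JbJ) − a·JbJ` is compact for all `a, b ∈ A`; we record its values
`θS i = θ(aᵢ ⊗ J bᵢ J)` on the legs of an element `S = ∑ aᵢ ⊗ J bᵢ J` of the algebraic
tensor product `A ⊙ JAJ`.  If `(P j)` is a net of finite-rank projections converging
strongly to `1`, then `limsup_j ‖ν(S)(1 − P j)‖ ≤ ‖Θ(S)‖`, where
`ν(S) = ∑ aᵢ · J bᵢ J` and `Θ(S) = ∑ θS i`. -/
theorem stmt3 {H : Type*} [NormedAddCommGroup H] [InnerProductSpace ℂ H] [CompleteSpace H]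
    (M : VonNeumannAlgebra H)
    -- the modular conjugation J: an antiunitary involution with J M J = M'
    (J : H → H)
    (Jadd : ∀ ξ η, J (ξ + η) = J ξ + J η)
    (Jsmul : ∀ (c : ℂ) ξ, J (c • ξ) = (starRingEnd ℂ) c • J ξ)
    (Jinv : ∀ ξ, J (J ξ) = ξ)
    (Jinner : ∀ ξ η, (inner ℂ (J ξ) (J η) : ℂ) = inner ℂ η ξ)
    (JMJ : ∀ x : H →L[ℂ] H, x ∈ M →
      ∀ y : H →L[ℂ] H, (∀ ξ, y ξ = J (x (J ξ))) → y ∈ Set.centralizer (M : Set (H →L[ℂ] H)))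
    -- A ⊂ M a σ-weakly dense unital C*-subalgebra (σ-weak density ⟺ A'' = M)
    (A : StarSubalgebra ℂ (H →L[ℂ] H)) (hAM : (A : Set (H →L[ℂ] H)) ⊆ M)
    (hdense : Set.centralizer (Set.centralizer (A : Set (H →L[ℂ] H))) = M)
    -- an element S = ∑ i, a i ⊗ (J (b i) J) of A ⊙ JAJ, with c i = J (b i) J
    (n : ℕ) (a b c : Fin n → (H →L[ℂ] H))
    (ha : ∀ i, a i ∈ A) (hb : ∀ i, b i ∈ A)
    (hc : ∀ i, ∀ ξ, (c i) ξ = J ((b i) (J ξ)))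
    -- the values θS i = θ(a i ⊗ J (b i) J) of the u.c.p. map θ, with θ(a⊗JbJ) − aJbJ compact
    (θS : Fin n → (H →L[ℂ] H))
    (hθcompact : ∀ i, IsCompactOperator ((θS i - a i * c i) : H →L[ℂ] H))
    -- a net of finite-rank projections converging strongly to 1
    {ι : Type*} (l : Filter ι) [l.NeBot] (P : ι → (H →L[ℂ] H))
    (hPproj : ∀ j, IsProjection (P j))
    (hPfin : ∀ j, FiniteDimensional ℂ (LinearMap.range ((P j) : H →ₗ[ℂ] H)))
    (hPto1 : ∀ ξ : H, Filter.Tendsto (fun j => (P j) ξ) l (nhds ξ)) :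
    Filter.limsup (fun j => ‖(∑ i, a i * c i) * (1 - P j)‖) l ≤ ‖∑ i, θS i‖ :=
  stmt3_general n a c θS hθcompact l P hPproj hPto1
end

section
/- Let ψ: B(H)⊗B(K) → B(H) be a u.c.p. map such that ψ(x⊗y) − xy is compact for all x in a C*-algebra A ⊂ B(H) and all y in a C*-algebra B ⊂ B(H) commuting with A (here x⊗y denotes the element of the minimal tensor product A⊗B). Then the map a⊗b ↦ ab + K(H) from A⊙B to the Calkin algebra B(H)/K(H) extends to a bounded (indeed u.c.p.) map on the minimal tensor product A⊗B. -/
noncomputable section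
set_option synthInstance.maxHeartbeats 1000000

instance {E : Type*} [NormedAddCommGroup E] [InnerProductSpace ℂ E] [CompleteSpace E]
    {n : ℕ} : CompleteSpace (PiLp 2 fun _ : Fin n => E) :=
  inferInstance

/-- The operator on `ℓ²(Fin n, E)` induced by an `n × n` matrix of operators on `E`. -/
def matOp {E : Type*} [NormedAddCommGroup E] [InnerProductSpace ℂ E]
    {n : ℕ} (x : Matrix (Fin n) (Fin n) (E →L[ℂ] E)) :
    (PiLp 2 fun _ : Fin n => E) →L[ℂ] PiLp 2 fun _ : Fin n => E :=
  (((PiLp.continuousLinearEquiv 2 ℂ (fun _ : Fin n => E)).symm :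
      (∀ _ : Fin n, E) →L[ℂ] PiLp 2 fun _ : Fin n => E).comp
    (ContinuousLinearMap.pi fun i => ∑ j, (x i j).comp (ContinuousLinearMap.proj j))).comp
    ((PiLp.continuousLinearEquiv 2 ℂ (fun _ : Fin n => E)) :
      (PiLp 2 fun _ : Fin n => E) →L[ℂ] ∀ _ : Fin n, E)

/-! A unital 2-positive map is contractive: for `c = ‖x‖` the operator matrix
`[[c, x], [x*, c]]` is positive, hence so is `[[c, ψ x], [ψ x*, c]]`, and positivity of the
latter forces `‖ψ x‖ ≤ c`. Modulo compact operators `ψ (∑ aᵢ ⊗ bᵢ)` equals `∑ aᵢ bᵢ`, so the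
Calkin norm of `∑ aᵢ bᵢ` is at most `‖ψ (∑ aᵢ ⊗ bᵢ)‖ ≤ ‖∑ aᵢ ⊗ bᵢ‖`. -/

open ContinuousLinearMap

lemma infDist_setOf_isCompactOperator_le {𝕜 E F : Type*} [NontriviallyNormedField 𝕜]
    [NormedAddCommGroup E] [NormedSpace 𝕜 E] [NormedAddCommGroup F] [NormedSpace 𝕜 F]
    {x y : E →L[𝕜] F} (h : IsCompactOperator (y - x)) :
    Metric.infDist x {k : E →L[𝕜] F | IsCompactOperator k} ≤ ‖y‖ :=
  calc Metric.infDist x {k : E →L[𝕜] F | IsCompactOperator k}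
      ≤ dist x (x - y) := Metric.infDist_le_dist_of_mem (by simpa using h.neg)
    _ = ‖y‖ := by simp

section

variable {E : Type*} [NormedAddCommGroup E] [InnerProductSpace ℂ E]

lemma matOp_apply {n : ℕ} (m : Matrix (Fin n) (Fin n) (E →L[ℂ] E))
    (v : PiLp 2 fun _ : Fin n => E) (i : Fin n) : matOp m v i = ∑ j, m i j (v j) := by
  simp [matOp]

lemma inner_matOp_fin_two (m : Matrix (Fin 2) (Fin 2) (E →L[ℂ] E))
    (v w : PiLp 2 fun _ : Fin 2 => E) :
    inner ℂ (matOp m v) w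
      = inner ℂ (m 0 0 (v 0) + m 0 1 (v 1)) (w 0) + inner ℂ (m 1 0 (v 0) + m 1 1 (v 1)) (w 1) := by
  simp only [PiLp.inner_apply, Fin.sum_univ_two, matOp_apply]

lemma re_inner_matOp_block_self (c : ℝ) (y z : E →L[ℂ] E) (v : PiLp 2 fun _ : Fin 2 => E) :
    RCLike.re (inner ℂ (matOp !![(c : ℂ) • 1, y; z, (c : ℂ) • 1] v) v)
      = c * ‖v 0‖ ^ 2 + c * ‖v 1‖ ^ 2
        + RCLike.re (inner ℂ (y (v 1)) (v 0)) + RCLike.re (inner ℂ (z (v 0)) (v 1)) := by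
  simp [inner_matOp_fin_two, ← Complex.ofReal_pow]
  ring

lemma isPositive_matOp_block [CompleteSpace E] {x : E →L[ℂ] E} {c : ℝ} (hx : ‖x‖ ≤ c) :
    (matOp !![(c : ℂ) • 1, x; adjoint x, (c : ℂ) • 1]).IsPositive := by
  refine ⟨fun v w => ?_, fun v => ?_⟩
  · rw [coe_coe, ← inner_conj_symm v, inner_matOp_fin_two, inner_matOp_fin_two]
    simp [adjoint_inner_left]
    ring
  · have hcross : |RCLike.re (inner ℂ (x (v 1)) (v 0))| ≤ c * ‖v 1‖ * ‖v 0‖ :=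
      calc |RCLike.re (inner ℂ (x (v 1)) (v 0))| ≤ ‖x (v 1)‖ * ‖v 0‖ :=
            (RCLike.abs_re_le_norm _).trans (norm_inner_le_norm _ _)
        _ ≤ c * ‖v 1‖ * ‖v 0‖ := by gcongr; exact x.le_of_opNorm_le hx _
    rw [reApplyInnerSelf, re_inner_matOp_block_self, adjoint_inner_left, inner_re_symm (v 0)]
    nlinarith [abs_le.mp hcross, mul_nonneg ((norm_nonneg x).trans hx) (sq_nonneg (‖v 0‖ - ‖v 1‖))]

lemma norm_le_of_isPositive_matOp_block {y z : E →L[ℂ] E} {c : ℝ} (hc : 0 < c)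
    (h : (matOp !![(c : ℂ) • 1, y; z, (c : ℂ) • 1]).IsPositive) : ‖y‖ ≤ c := by
  have hz : ∀ ξ η, inner ℂ (z ξ) η = inner ℂ ξ (y η) := fun ξ η => by
    have hsymm := h.inner_left_eq_inner_right (WithLp.toLp 2 ![ξ, 0]) (WithLp.toLp 2 ![0, η])
    rw [← inner_conj_symm _ (matOp _ _), inner_matOp_fin_two, inner_matOp_fin_two] at hsymm
    simpa using hsymm
  refine opNorm_le_bound y hc.le fun η => ?_
  have hquad : c⁻¹ * ‖y η‖ ^ 2 ≤ c * ‖η‖ ^ 2 := by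
    have hpos := h.re_inner_nonneg_left (WithLp.toLp 2 ![-(c⁻¹ : ℂ) • y η, η])
    rw [re_inner_matOp_block_self] at hpos
    simp [hz, norm_smul, inner_smul_left, inner_smul_right,
      abs_of_pos hc, ← Complex.ofReal_pow] at hpos
    have hcancel : c * (c⁻¹ * ‖y η‖) ^ 2 = c⁻¹ * ‖y η‖ ^ 2 := by field_simp
    linarith
  have hsq : ‖y η‖ ^ 2 ≤ (c * ‖η‖) ^ 2 :=
    calc ‖y η‖ ^ 2 = c * (c⁻¹ * ‖y η‖ ^ 2) := by field_simp
      _ ≤ c * (c * ‖η‖ ^ 2) := mul_le_mul_of_nonneg_left hquad hc.le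
      _ = (c * ‖η‖) ^ 2 := by ring
  exact le_of_pow_le_pow_left₀ two_ne_zero (by positivity) hsq

variable {F : Type*} [NormedAddCommGroup F] [InnerProductSpace ℂ F]

lemma norm_map_le_of_isPositive_matOp [CompleteSpace E]
    (ψ : (E →L[ℂ] E) →ₗ[ℂ] (F →L[ℂ] F)) (hψ1 : ψ 1 = 1)
    (hψ : ∀ m : Matrix (Fin 2) (Fin 2) (E →L[ℂ] E),
      (matOp m).IsPositive → (matOp (m.map ψ)).IsPositive)
    (x : E →L[ℂ] E) : ‖ψ x‖ ≤ ‖x‖ := by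
  rcases eq_or_ne x 0 with rfl | hx
  · simp
  have hmap : (!![(‖x‖ : ℂ) • 1, x; adjoint x, (‖x‖ : ℂ) • 1]).map ψ
      = !![(‖x‖ : ℂ) • 1, ψ x; ψ (adjoint x), (‖x‖ : ℂ) • 1] := by
    ext i j; fin_cases i <;> fin_cases j <;> simp [hψ1]
  have hpos := hψ _ (isPositive_matOp_block (le_refl ‖x‖))
  rw [hmap] at hpos
  exact norm_le_of_isPositive_matOp_block (norm_pos_iff.mpr hx) hpos

end

theorem stmt17_general {H L : Type*}
    [NormedAddCommGroup H] [InnerProductSpace ℂ H] [CompleteSpace H]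
    [NormedAddCommGroup L] [InnerProductSpace ℂ L] [CompleteSpace L]
    (A B : StarSubalgebra ℂ (H →L[ℂ] H))
    (eA eB : (H →L[ℂ] H) → (L →L[ℂ] L))
    -- the u.c.p. map ψ
    (ψ : (L →L[ℂ] L) →ₗ[ℂ] (H →L[ℂ] H))
    (hψ1 : ψ 1 = 1)
    (hψcp : ∀ (n : ℕ) (x : Matrix (Fin n) (Fin n) (L →L[ℂ] L)),
      (matOp x).IsPositive → (matOp (x.map ψ)).IsPositive)
    (hψcomp : ∀ a ∈ A, ∀ b ∈ B, IsCompactOperator ((ψ (eA a * eB b) - a * b) : H →L[ℂ] H)) :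
    ∀ (n : ℕ) (a b : Fin n → (H →L[ℂ] H)), (∀ i, a i ∈ A) → (∀ i, b i ∈ B) →
      Metric.infDist ((∑ i, a i * b i : H →L[ℂ] H))
        {k : H →L[ℂ] H | IsCompactOperator k} ≤ ‖∑ i, eA (a i) * eB (b i)‖ := by
  intro n a b ha hb
  have hcompact : IsCompactOperator (ψ (∑ i, eA (a i) * eB (b i)) - ∑ i, a i * b i) := by
    rw [map_sum, ← Finset.sum_sub_distrib]
    exact Submodule.sum_mem (compactOperator (RingHom.id ℂ) H H) fun i _ ↦
      hψcomp _ (ha i) _ (hb i)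
  exact (infDist_setOf_isCompactOperator_le hcompact).trans
    (norm_map_le_of_isPositive_matOp ψ hψ1 (hψcp 2) _)

/-- let `A, B ⊆ B(H)` be commuting unital C*-subalgebras, and realise the
minimal tensor product `A ⊗ B` spatially inside `B(L)` for `L = H ⊗ H` (tensor structure
`et`, with `eA a = a ⊗ 1` and `eB b = 1 ⊗ b`).  If `ψ : B(H)⊗B(H) → B(H)` is a u.c.p.
map with `ψ(a ⊗ b) − ab` compact for all `a ∈ A`, `b ∈ B`, then the multiplication map
`a ⊗ b ↦ ab + K(H)` into the Calkin algebra is bounded (contractive) for the minimal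
tensor norm: `‖∑ aᵢbᵢ‖_{B(H)/K(H)} ≤ ‖∑ aᵢ ⊗ bᵢ‖_{min}`. -/
theorem stmt17 {H L : Type*}
    [NormedAddCommGroup H] [InnerProductSpace ℂ H] [CompleteSpace H]
    [NormedAddCommGroup L] [InnerProductSpace ℂ L] [CompleteSpace L]
    (A B : StarSubalgebra ℂ (H →L[ℂ] H))
    (hcomm : ∀ a ∈ A, ∀ b ∈ B, a * b = b * a)
    -- spatial realisation of the minimal tensor product on L ≅ H ⊗ H
    (et : H → H → L)
    (hinner : ∀ ξ η ξ' η' : H,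
      (inner ℂ (et ξ η) (et ξ' η') : ℂ) = (inner ℂ ξ ξ' : ℂ) * (inner ℂ η η' : ℂ))
    (htotal : closure (Submodule.span ℂ (Set.range fun p : H × H => et p.1 p.2) : Set L)
      = Set.univ)
    (eA eB : (H →L[ℂ] H) → (L →L[ℂ] L))
    (heA : ∀ (a : H →L[ℂ] H) (ξ η : H), (eA a) (et ξ η) = et (a ξ) η)
    (heB : ∀ (b : H →L[ℂ] H) (ξ η : H), (eB b) (et ξ η) = et ξ (b η))
    -- the u.c.p. map ψ
    (ψ : (L →L[ℂ] L) →ₗ[ℂ] (H →L[ℂ] H))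
    (hψ1 : ψ 1 = 1)
    (hψcp : ∀ (n : ℕ) (x : Matrix (Fin n) (Fin n) (L →L[ℂ] L)),
      (matOp x).IsPositive → (matOp (x.map ψ)).IsPositive)
    (hψcomp : ∀ a ∈ A, ∀ b ∈ B, IsCompactOperator ((ψ (eA a * eB b) - a * b) : H →L[ℂ] H)) :
    ∀ (n : ℕ) (a b : Fin n → (H →L[ℂ] H)), (∀ i, a i ∈ A) → (∀ i, b i ∈ B) →
      Metric.infDist ((∑ i, a i * b i : H →L[ℂ] H))
        {k : H →L[ℂ] H | IsCompactOperator k} ≤ ‖∑ i, eA (a i) * eB (b i)‖ :=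
  stmt17_general A B eA eB ψ hψ1 hψcp hψcomp
end
end
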